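/- If G is a bipartite graph with a perfect matching such that Af(G) = r(G), where r(G) is the cyclomatic number, then every fixed edge of G is a cut-edge and every normal component Gᵢ of G satisfies Af(Gᵢ) = r(Gᵢ). -/

import Mathlib

/-!
Let `F` be the set of fixed edges and `G₁, …, G_c` the normal components. Restricting a
perfect matching of maximum anti-forcing number to the normal components and joining optimal
anti-forcing sets there gives `Af G ≤ ∑ Af Gᵢ`, because fixed edges lie in every perfect
matching. In a connected graph, deleting the edges outside a spanning tree through a perfect
matching `M` leaves `M` as the only perfect matching (a forest has at most one), so
`Af Gᵢ ≤ r Gᵢ`. Contracting the normal components of the connected graph `G` leaves a connected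
graph with at most `|F|` edges, so `c ≤ |F| + 1`. Hence `Af G ≤ ∑ r Gᵢ = r G - (|F| + 1 - c)
≤ r G`, and `Af G = r G` forces `Af Gᵢ = r Gᵢ` for every `i` and `c = |F| + 1`; then every
fixed edge is a bridge, as deleting a non-bridge fixed edge would keep `G` connected and violate
`c ≤ |F| + 1`.
-/

open scoped Classical

variable {V : Type*} [Fintype V] [DecidableEq V]

/-- `M` is a perfect matching of `G`: a set of edges of `G` such that every
vertex lies in exactly one edge of `M`. -/
def IsPM (G : SimpleGraph V) (M : Set (Sym2 V)) : Prop :=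
  M ⊆ G.edgeSet ∧ ∀ v : V, ∃! e, e ∈ M ∧ v ∈ e

/-- `M` is the unique perfect matching of `G`. -/
def IsUniquePM (G : SimpleGraph V) (M : Set (Sym2 V)) : Prop :=
  IsPM G M ∧ ∀ M', IsPM G M' → M' = M

/-- A closed walk `c` is an `M`-alternating cycle: it is a cycle of even length
whose edges lie alternately in `M` and outside `M`. -/
def IsAltCycle {G : SimpleGraph V} (M : Set (Sym2 V)) {v : V} (c : G.Walk v v) : Prop :=
  c.IsCycle ∧ Even c.edges.length ∧
    ((∀ i (h : i < c.edges.length), c.edges.get ⟨i, h⟩ ∈ M ↔ Even i) ∨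
     (∀ i (h : i < c.edges.length), c.edges.get ⟨i, h⟩ ∈ M ↔ ¬ Even i))

/-- `S` is an anti-forcing set of the perfect matching `M` of `G`:
`S` consists of edges of `G` not in `M` and `M` is the unique perfect matching
of `G - S`. -/
def IsAntiForcingSet (G : SimpleGraph V) (M S : Set (Sym2 V)) : Prop :=
  S ⊆ G.edgeSet \ M ∧ IsUniquePM (G.deleteEdges S) M

/-- The anti-forcing number of a perfect matching `M` of `G`. -/
noncomputable def af (G : SimpleGraph V) (M : Set (Sym2 V)) : ℕ :=
  sInf {n | ∃ S : Finset (Sym2 V), S.card = n ∧ IsAntiForcingSet G M ↑S}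

/-- The maximum anti-forcing number of `G`. -/
noncomputable def Af (G : SimpleGraph V) : ℕ :=
  sSup {n | ∃ M, IsPM G M ∧ af G M = n}

/-- An edge of `G` is fixed if it lies in no perfect matching or in all perfect
matchings of `G`. -/
def IsFixedEdge (G : SimpleGraph V) (e : Sym2 V) : Prop :=
  e ∈ G.edgeSet ∧ ((∀ M, IsPM G M → e ∉ M) ∨ (∀ M, IsPM G M → e ∈ M))

/-- The subgraph of `G` formed by the non-fixed edges; its connected components
are the normal components of `G`. -/
def nonFixed (G : SimpleGraph V) : SimpleGraph V :=
  SimpleGraph.fromEdgeSet {e | e ∈ G.edgeSet ∧ ¬ IsFixedEdge G e}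

noncomputable instance (H : SimpleGraph V) : Fintype H.ConnectedComponent :=
  Fintype.ofSurjective H.connectedComponentMk (fun K => K.exists_rep)

open SimpleGraph
open scoped symmDiff

section PerfectMatching

variable {W : Type*} {G H : SimpleGraph W} {M M' : Set (Sym2 W)}

lemma IsPM.eq_of_mem (hM : IsPM G M) {e f : Sym2 W} {v : W} (he : e ∈ M) (hf : f ∈ M)
    (hve : v ∈ e) (hvf : v ∈ f) : e = f :=
  (hM.2 v).unique ⟨he, hve⟩ ⟨hf, hvf⟩

lemma IsPM.mono (hGH : G ≤ H) (hM : IsPM G M) : IsPM H M :=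
  ⟨hM.1.trans (edgeSet_mono hGH), hM.2⟩

lemma IsPM.deleteEdges {S : Set (Sym2 W)} (hM : IsPM G M) (hS : Disjoint M S) :
    IsPM (G.deleteEdges S) M := by
  refine ⟨fun e he => ?_, hM.2⟩
  rw [edgeSet_deleteEdges]
  exact ⟨hM.1 he, hS.notMem_of_mem_left he⟩

lemma IsPM.eq_of_subset (hM : IsPM G M) (hM' : IsPM H M') (hsub : M ⊆ M') : M' = M := by
  refine (Set.Subset.antisymm_iff.2 ⟨fun e he => ?_, hsub⟩)
  obtain ⟨f, ⟨hf, hvf⟩, -⟩ := hM.2 e.out.1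
  rwa [hM'.eq_of_mem he (hsub hf) e.out_fst_mem hvf]

lemma IsPM.adj_of_mem (hM : IsPM G M) {v w : W} (h : s(v, w) ∈ M) : G.Adj v w :=
  G.mem_edgeSet.1 (hM.1 h)

lemma IsPM.isPerfectMatching (hM : IsPM G M) :
    (toSubgraph (fromEdgeSet M) le_top : (⊤ : SimpleGraph W).Subgraph).IsPerfectMatching := by
  rw [Subgraph.isPerfectMatching_iff]
  intro v
  obtain ⟨e, ⟨he, hve⟩, huniq⟩ := hM.2 v
  obtain ⟨w, rfl⟩ := Sym2.mem_iff_exists.1 hve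
  refine ⟨w, ⟨he, (hM.adj_of_mem he).ne⟩, fun u hu => ?_⟩
  have := huniq _ ⟨hu.1, Sym2.mem_mk_left v u⟩
  rcases Sym2.eq_iff.1 this with ⟨-, rfl⟩ | ⟨rfl, rfl⟩
  · rfl
  · exact absurd rfl hu.2

lemma IsPM.isAcyclic_fromEdgeSet (hM : IsPM G M) : (fromEdgeSet M).IsAcyclic := by
  refine isAcyclic_iff_forall_adj_isBridge.2 fun v w hvw => isBridge_iff.2 ?_
  rintro ⟨_ | ⟨hvx, -⟩⟩
  · exact hvw.ne rfl
  · rw [deleteEdges_adj, fromEdgeSet_adj] at hvx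
    exact hvx.2 (hM.eq_of_mem hvx.1.1 (fromEdgeSet_adj _ |>.1 hvw).1 (Sym2.mem_mk_left _ _)
      (Sym2.mem_mk_left _ _))

/-- The symmetric difference of two perfect matchings is a disjoint union of cycles, so in a
forest it is empty. -/
lemma IsPM.eq_of_isAcyclic [Finite W] (hH : H.IsAcyclic) (hM : IsPM H M) (hM' : IsPM H M') :
    M' = M := by
  set D := fromEdgeSet M ∆ fromEdgeSet M'
  have hD : D = ⊥ := by
    have hcyc : D.IsCycles := hM.isPerfectMatching.symmDiff_isCycles hM'.isPerfectMatching
    have hDH : D ≤ H := fun v w h => by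
      rcases h with ⟨h, -⟩ | ⟨h, -⟩
      · exact hM.adj_of_mem ((fromEdgeSet_adj _).1 h).1
      · exact hM'.adj_of_mem ((fromEdgeSet_adj _).1 h).1
    refine eq_bot_iff.2 fun v w hvw => ?_
    exact isBridge_iff.1 (isAcyclic_iff_forall_adj_isBridge.1 (hH.anti hDH) hvw)
      (hcyc.reachable_deleteEdges hvw)
  have hMM' : fromEdgeSet M = fromEdgeSet M' := symmDiff_eq_bot.1 hD
  have hdiag : ∀ {N}, IsPM H N → (fromEdgeSet N).edgeSet = N := fun hN => by
    rw [edgeSet_fromEdgeSet, sdiff_eq_left]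
    exact Set.disjoint_left.2 fun e he => H.not_isDiag_of_mem_edgeSet (hN.1 he)
  rw [← hdiag hM, ← hdiag hM', hMM']

end PerfectMatching

section AntiForcing

variable {W : Type*} {G H : SimpleGraph W} {M : Set (Sym2 W)}

lemma IsPM.isAntiForcingSet_of_isAcyclic [Finite W] {S : Set (Sym2 W)} (hM : IsPM G M)
    (hS : S ⊆ G.edgeSet \ M) (hacyc : (G.deleteEdges S).IsAcyclic) : IsAntiForcingSet G M S := by
  have hM' : IsPM (G.deleteEdges S) M :=
    hM.deleteEdges (Set.disjoint_right.2 fun _ he => (hS he).2)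
  exact ⟨hS, hM', fun _ hN => hM'.eq_of_isAcyclic hacyc hN⟩

lemma IsPM.exists_isAntiForcingSet [Finite W] (hM : IsPM G M) :
    ∃ S : Finset (Sym2 W), IsAntiForcingSet G M ↑S := by
  refine ⟨(G.edgeSet \ M).toFinite.toFinset, ?_⟩
  rw [Set.Finite.coe_toFinset]
  refine hM.isAntiForcingSet_of_isAcyclic le_rfl (hM.isAcyclic_fromEdgeSet.anti fun v w h => ?_)
  rw [deleteEdges_adj] at h
  exact (fromEdgeSet_adj _).2 ⟨by_contra fun hvw => h.2 ⟨h.1, hvw⟩, h.1.ne⟩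

lemma af_le_card {S : Finset (Sym2 W)} (hS : IsAntiForcingSet G M ↑S) : af G M ≤ S.card :=
  Nat.sInf_le ⟨S, rfl, hS⟩

lemma IsPM.exists_isAntiForcingSet_card_eq_af [Finite W] (hM : IsPM G M) :
    ∃ S : Finset (Sym2 W), S.card = af G M ∧ IsAntiForcingSet G M ↑S :=
  let ⟨S, hS⟩ := hM.exists_isAntiForcingSet
  Nat.sInf_mem (s := {n | ∃ S : Finset (Sym2 W), S.card = n ∧ IsAntiForcingSet G M ↑S})
    ⟨S.card, S, rfl, hS⟩

lemma bddAbove_af [Finite W] (G : SimpleGraph W) :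
    BddAbove {n | ∃ M, IsPM G M ∧ af G M = n} := by
  cases nonempty_fintype W
  refine ⟨Fintype.card (Sym2 W), ?_⟩
  rintro _ ⟨M, hM, rfl⟩
  obtain ⟨S, hS, -⟩ := hM.exists_isAntiForcingSet_card_eq_af
  exact hS ▸ S.card_le_univ

lemma IsPM.af_le_Af [Finite W] (hM : IsPM G M) : af G M ≤ Af G :=
  le_csSup (bddAbove_af G) ⟨M, hM, rfl⟩

lemma IsPM.exists_af_eq_Af [Finite W] (hM : IsPM G M) : ∃ N, IsPM G N ∧ af G N = Af G :=
  Nat.sSup_mem (s := {n | ∃ M, IsPM G M ∧ af G M = n}) ⟨af G M, M, hM, rfl⟩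
    (bddAbove_af G)

lemma Af_eq_zero_of_forall_not_isPM (h : ∀ M, ¬ IsPM G M) : Af G = 0 := by
  simp [Af, h]

lemma exists_card_le_Af [Finite W] (G : SimpleGraph W) (M : Set (Sym2 W)) :
    ∃ S : Finset (Sym2 W), S.card ≤ Af G ∧ ↑S ⊆ G.edgeSet \ M ∧
      (IsPM G M → IsAntiForcingSet G M ↑S) := by
  by_cases hM : IsPM G M
  · obtain ⟨S, hcard, hS⟩ := hM.exists_isAntiForcingSet_card_eq_af
    exact ⟨S, hcard ▸ hM.af_le_Af, hS.1, fun _ => hS⟩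
  · exact ⟨∅, Nat.zero_le _, by simp, hM.elim⟩

lemma IsPM.af_add_card_le [Finite W] (hG : G.Connected) (hM : IsPM G M) :
    af G M + Nat.card W ≤ G.edgeSet.ncard + 1 := by
  have hMG : fromEdgeSet M ≤ G := fun v w h => hM.adj_of_mem ((fromEdgeSet_adj _).1 h).1
  obtain ⟨T, hMT, hTG, hT⟩ :=
    hG.exists_isTree_le_of_le_of_isAcyclic hMG hM.isAcyclic_fromEdgeSet
  have hMT' : M ⊆ T.edgeSet := fun e he => by
    induction e using Sym2.ind with
    | _ v w => exact hMT ((fromEdgeSet_adj _).2 ⟨he, (hM.adj_of_mem he).ne⟩)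
  have hS : IsAntiForcingSet G M ↑(G.edgeSet \ T.edgeSet).toFinite.toFinset := by
    rw [Set.Finite.coe_toFinset]
    refine hM.isAntiForcingSet_of_isAcyclic (fun e he => ⟨he.1, fun heM => he.2 (hMT' heM)⟩) ?_
    rw [deleteEdges_sdiff_eq_of_le hTG]
    exact hT.isAcyclic
  have hTcard : T.edgeSet.ncard + 1 = Nat.card W := by
    rw [← Nat.card_coe_set_eq]
    exact (isTree_iff_connected_and_card.1 hT).2
  have hTle : T.edgeSet.ncard ≤ G.edgeSet.ncard := Set.ncard_le_ncard (edgeSet_mono hTG)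
  have := af_le_card hS
  rw [← Set.ncard_eq_toFinset_card _, Set.ncard_sdiff (edgeSet_mono hTG)] at this
  omega

lemma Af_add_card_le [Finite W] (hG : G.Connected) :
    Af G + Nat.card W ≤ G.edgeSet.ncard + 1 := by
  by_cases h : ∃ M, IsPM G M
  · obtain ⟨M, hM⟩ := h
    obtain ⟨N, hN, hNAf⟩ := hM.exists_af_eq_Af
    exact hNAf ▸ hN.af_add_card_le hG
  · rw [not_exists] at h
    rw [Af_eq_zero_of_forall_not_isPM h, zero_add, ← Nat.card_coe_set_eq]
    exact hG.card_vert_le_card_edgeSet_add_one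

end AntiForcing

namespace SimpleGraph

variable {W : Type*} {G H : SimpleGraph W}

/-- `G` with the connected components of `H` contracted to vertices. -/
def componentGraph (G H : SimpleGraph W) : SimpleGraph H.ConnectedComponent :=
  fromRel fun K L =>
    ∃ u v, G.Adj u v ∧ H.connectedComponentMk u = K ∧ H.connectedComponentMk v = L

lemma Reachable.componentGraph {u v : W} (h : G.Reachable u v) :
    (componentGraph G H).Reachable (H.connectedComponentMk u) (H.connectedComponentMk v) := by
  rw [reachable_iff_reflTransGen] at h ⊢
  refine Relation.ReflTransGen.lift' _ (fun a b hab => ?_) u v h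
  change Relation.ReflTransGen _ (H.connectedComponentMk a) (H.connectedComponentMk b)
  by_cases heq : H.connectedComponentMk a = H.connectedComponentMk b
  · exact heq ▸ Relation.ReflTransGen.refl
  · exact .single ((fromRel_adj _ _ _).2 ⟨heq, .inl ⟨a, b, hab, rfl, rfl⟩⟩)

lemma Connected.componentGraph (hG : G.Connected) : (componentGraph G H).Connected := by
  refine (connected_iff _).2 ⟨fun K L => ?_, hG.nonempty.map H.connectedComponentMk⟩
  induction K using ConnectedComponent.ind with | h u =>
  induction L using ConnectedComponent.ind with | h v =>
  exact (hG.preconnected u v).componentGraph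

lemma edgeSet_componentGraph_subset :
    (componentGraph G H).edgeSet ⊆
      Sym2.map H.connectedComponentMk '' (G.edgeSet \ H.edgeSet) := by
  intro e he
  induction e using Sym2.ind with | _ K L =>
  have hnotH {u v : W} (hne : H.connectedComponentMk u ≠ H.connectedComponentMk v) :
      s(u, v) ∉ H.edgeSet := fun h => hne (ConnectedComponent.connectedComponentMk_eq_of_adj h)
  obtain ⟨hne, ⟨u, v, huv, rfl, rfl⟩ | ⟨u, v, huv, rfl, rfl⟩⟩ :=
    (fromRel_adj _ _ _).1 ((mem_edgeSet _).1 he)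
  · exact ⟨s(u, v), ⟨huv, hnotH hne⟩, rfl⟩
  · exact ⟨s(u, v), ⟨huv, hnotH hne.symm⟩, Sym2.eq_swap⟩

theorem card_connectedComponent_le [Finite W] (hG : G.Connected) :
    Nat.card H.ConnectedComponent ≤ (G.edgeSet \ H.edgeSet).ncard + 1 :=
  calc Nat.card H.ConnectedComponent
      ≤ Nat.card (componentGraph G H).edgeSet + 1 :=
        hG.componentGraph.card_vert_le_card_edgeSet_add_one
    _ ≤ (Sym2.map H.connectedComponentMk '' (G.edgeSet \ H.edgeSet)).ncard + 1 := by
      rw [Nat.card_coe_set_eq]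
      exact Nat.add_le_add_right (Set.ncard_le_ncard edgeSet_componentGraph_subset) 1
    _ ≤ (G.edgeSet \ H.edgeSet).ncard + 1 := Nat.add_le_add_right (Set.ncard_image_le) 1

theorem isBridge_of_card_connectedComponent_eq [Finite W] (hG : G.Connected)
    (hcard : Nat.card H.ConnectedComponent = (G.edgeSet \ H.edgeSet).ncard + 1) {e : Sym2 W}
    (he : e ∈ G.edgeSet \ H.edgeSet) : G.IsBridge e := by
  induction e using Sym2.ind with | _ u v =>
  by_contra hbr
  have hle := card_connectedComponent_le (H := H) (hG.connected_delete_edge_of_not_isBridge hbr)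
  rw [edgeSet_deleteEdges, Set.sdiff_sdiff_comm, Set.ncard_sdiff_singleton_of_mem he] at hle
  have hpos : 0 < (G.edgeSet \ H.edgeSet).ncard := (Set.ncard_pos).2 ⟨_, he⟩
  omega

lemma exists_adj_of_mem_supp {H : SimpleGraph W} {u v x : W} (huv : H.Adj u v)
    (hx : x ∈ (H.connectedComponentMk u).supp) : ∃ y, H.Adj x y := by
  obtain ⟨p⟩ := ConnectedComponent.exact hx
  cases p with
  | nil => exact ⟨v, huv⟩
  | cons h _ => exact ⟨_, h⟩

lemma sum_card_supp [Fintype W] [DecidableEq W] (H : SimpleGraph W) :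
    ∑ K : H.ConnectedComponent, Nat.card K.supp = Fintype.card W := by
  rw [← Nat.card_eq_fintype_card, ← Set.ncard_univ, ← iUnion_connectedComponentSupp H,
    Set.ncard_iUnion_of_finite (fun _ => Set.toFinite _)
      (pairwise_disjoint_supp_connectedComponent H), finsum_eq_sum_of_fintype]
  simp only [Nat.card_coe_set_eq]

lemma edgeSet_eq_iUnion_induce_supp (H : SimpleGraph W) :
    H.edgeSet =
      ⋃ K : H.ConnectedComponent, Sym2.map Subtype.val '' (H.induce K.supp).edgeSet := by
  ext e
  simp only [Set.mem_iUnion, Set.mem_image]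
  constructor
  · induction e using Sym2.ind with | _ u v =>
    intro h
    exact ⟨H.connectedComponentMk u,
      s(⟨u, rfl⟩, ⟨v, (ConnectedComponent.connectedComponentMk_eq_of_adj h).symm⟩), h, rfl⟩
  · rintro ⟨K, e', he', rfl⟩
    exact (Embedding.induce K.supp).toHom.map_mem_edgeSet he'

lemma sum_ncard_edgeSet_induce_supp [Fintype W] [DecidableEq W] (H : SimpleGraph W) :
    ∑ K : H.ConnectedComponent, (H.induce K.supp).edgeSet.ncard = H.edgeSet.ncard := by
  have hdisj : Pairwise (Function.onFun Disjoint fun K : H.ConnectedComponent =>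
      Sym2.map Subtype.val '' (H.induce K.supp).edgeSet) := by
    refine fun K L hKL => Set.disjoint_left.2 ?_
    rintro _ ⟨e, -, rfl⟩ ⟨f, -, hfe⟩
    obtain ⟨x, hx⟩ : ∃ x, x ∈ e.map Subtype.val := ⟨_, Sym2.out_fst_mem _⟩
    obtain ⟨⟨w, hwK⟩, -, hw⟩ := Sym2.mem_map.1 hx
    obtain ⟨⟨v, hvL⟩, -, hv⟩ := Sym2.mem_map.1 (hfe ▸ hx)
    have hvw : v = w := hv.trans hw.symm
    exact hKL (ConnectedComponent.eq_of_common_vertex hwK (hvw ▸ hvL))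
  rw [edgeSet_eq_iUnion_induce_supp H, Set.ncard_iUnion_of_finite (fun _ => Set.toFinite _) hdisj,
    finsum_eq_sum_of_fintype]
  simp only [Set.ncard_image_of_injective _ (Sym2.map.injective Subtype.val_injective)]

end SimpleGraph

section NormalComponents

variable {W : Type*} {G : SimpleGraph W} {M M' : Set (Sym2 W)}

lemma mem_edgeSet_nonFixed {e : Sym2 W} :
    e ∈ (nonFixed G).edgeSet ↔ e ∈ G.edgeSet ∧ ¬ IsFixedEdge G e := by
  rw [nonFixed, edgeSet_fromEdgeSet]
  exact ⟨fun h => h.1, fun h => ⟨h, G.not_isDiag_of_mem_edgeSet h.1⟩⟩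

lemma nonFixed_adj {u v : W} : (nonFixed G).Adj u v ↔ G.Adj u v ∧ ¬ IsFixedEdge G s(u, v) := by
  rw [← mem_edgeSet, mem_edgeSet_nonFixed, mem_edgeSet]

lemma nonFixed_le : nonFixed G ≤ G := fun _ _ h => (nonFixed_adj.1 h).1

lemma IsPM.mem_of_isFixedEdge (hM : IsPM G M) (hM' : IsPM G M') {e : Sym2 W}
    (hfix : IsFixedEdge G e) (he : e ∈ M) : e ∈ M' :=
  hfix.2.elim (fun hnone => (hnone M hM he).elim) fun hall => hall M' hM'

/-- A fixed matching edge at `x` would have to belong to a perfect matching through `xy`. -/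
lemma IsPM.not_isFixedEdge_of_mem (hM : IsPM G M) {x y : W} (hxy : (nonFixed G).Adj x y)
    {e : Sym2 W} (he : e ∈ M) (hxe : x ∈ e) : ¬ IsFixedEdge G e := by
  intro hfix
  obtain ⟨hG, hxyfix⟩ := nonFixed_adj.1 hxy
  obtain ⟨M₁, hM₁, hxyM₁⟩ : ∃ M₁, IsPM G M₁ ∧ s(x, y) ∈ M₁ := by
    by_contra! h
    exact hxyfix ⟨G.mem_edgeSet.2 hG, .inl h⟩
  have := hM₁.eq_of_mem (hM.mem_of_isFixedEdge hM₁ hfix he) hxyM₁ hxe (Sym2.mem_mk_left x y)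
  exact hxyfix (this ▸ hfix)

lemma IsPM.restrict (hM : IsPM G M) {u v : W} (huv : (nonFixed G).Adj u v) :
    IsPM ((nonFixed G).induce ((nonFixed G).connectedComponentMk u).supp)
      (Sym2.map Subtype.val ⁻¹' M) := by
  set K := (nonFixed G).connectedComponentMk u
  have hnf {x w : W} (hx : x ∈ K.supp) (hxw : s(x, w) ∈ M) : (nonFixed G).Adj x w := by
    obtain ⟨y, hxy⟩ := exists_adj_of_mem_supp huv hx
    exact nonFixed_adj.2
      ⟨hM.adj_of_mem hxw, hM.not_isFixedEdge_of_mem hxy hxw (Sym2.mem_mk_left x w)⟩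
  refine ⟨fun e he => ?_, fun x => ?_⟩
  · induction e using Sym2.ind with | _ a b => exact hnf a.2 he
  · obtain ⟨e, ⟨he, hxe⟩, huniq⟩ := hM.2 x
    obtain ⟨w, rfl⟩ := Sym2.mem_iff_exists.1 hxe
    have hw : w ∈ K.supp := (K.mem_supp_congr_adj (hnf x.2 he)).1 x.2
    refine ⟨s(x, ⟨w, hw⟩), ⟨he, Sym2.mem_mk_left _ _⟩, fun e' ⟨he', hxe'⟩ => ?_⟩
    exact Sym2.map.injective Subtype.val_injective
      (huniq _ ⟨he', Sym2.mem_map.2 ⟨x, hxe', rfl⟩⟩)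

lemma IsPM.eq_of_restrict_eq (hM : IsPM G M) (hM' : IsPM G M')
    (h : ∀ ⦃u v⦄, (nonFixed G).Adj u v →
      (Sym2.map Subtype.val ⁻¹' M' : Set (Sym2 ((nonFixed G).connectedComponentMk u).supp)) =
        Sym2.map Subtype.val ⁻¹' M) : M' = M := by
  refine hM.eq_of_subset hM' fun e he => ?_
  induction e using Sym2.ind with | _ u v =>
  by_cases hfix : IsFixedEdge G s(u, v)
  · exact hM.mem_of_isFixedEdge hM' hfix he
  · have huv : (nonFixed G).Adj u v := nonFixed_adj.2 ⟨hM.adj_of_mem he, hfix⟩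
    have hv : v ∈ ((nonFixed G).connectedComponentMk u).supp :=
      (ConnectedComponent.connectedComponentMk_eq_of_adj huv).symm
    have : s(⟨u, rfl⟩, ⟨v, hv⟩) ∈ (Sym2.map Subtype.val ⁻¹' M' :
        Set (Sym2 ((nonFixed G).connectedComponentMk u).supp)) := by
      rw [h huv]
      exact he
    exact this

lemma IsPM.isAntiForcingSet_iUnion (hM : IsPM G M)
    (S : ∀ K : (nonFixed G).ConnectedComponent, Set (Sym2 K.supp))
    (hsub : ∀ K, S K ⊆ ((nonFixed G).induce K.supp).edgeSet \ Sym2.map Subtype.val ⁻¹' M)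
    (hS : ∀ ⦃u v⦄ (_ : (nonFixed G).Adj u v),
      IsUniquePM (((nonFixed G).induce ((nonFixed G).connectedComponentMk u).supp).deleteEdges
        (S _)) (Sym2.map Subtype.val ⁻¹' M)) :
    IsAntiForcingSet G M (⋃ K, Sym2.map Subtype.val '' S K) := by
  have hsub' : ⋃ K, Sym2.map Subtype.val '' S K ⊆ G.edgeSet \ M := by
    simp only [Set.iUnion_subset_iff, Set.image_subset_iff]
    intro K e he
    exact ⟨edgeSet_mono nonFixed_le ((Embedding.induce _).toHom.map_mem_edgeSet (hsub K he).1),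
      (hsub K he).2⟩
  have hMdel := hM.deleteEdges (Set.disjoint_right.2 fun e he => (hsub' he).2)
  refine ⟨hsub', hMdel, fun M' hM' => hM.eq_of_restrict_eq (hM'.mono (deleteEdges_le _)) ?_⟩
  intro u v huv
  refine (hS huv).2 _ (((hM'.mono (deleteEdges_le _)).restrict huv).deleteEdges ?_)
  refine Set.disjoint_left.2 fun e heM' heS => ?_
  have := hM'.1 heM'
  rw [edgeSet_deleteEdges] at this
  exact this.2 (Set.mem_iUnion.2 ⟨_, e, heS, rfl⟩)

theorem Af_le_sum_Af_induce_supp [Fintype W] [DecidableEq W] (hM : IsPM G M) :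
    Af G ≤ ∑ K : (nonFixed G).ConnectedComponent, Af ((nonFixed G).induce K.supp) := by
  obtain ⟨N, hN, hAf⟩ := hM.exists_af_eq_Af
  choose S hScard hSsub hS using fun K : (nonFixed G).ConnectedComponent =>
    exists_card_le_Af ((nonFixed G).induce K.supp) (Sym2.map Subtype.val ⁻¹' N)
  set T := Finset.univ.biUnion fun K => (S K).image (Sym2.map Subtype.val)
  have hT : IsAntiForcingSet G N ↑T := by
    have := hN.isAntiForcingSet_iUnion (fun K => ↑(S K)) hSsub
      fun u v huv => (hS _ (hN.restrict huv)).2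
    simpa [T] using this
  calc Af G = af G N := hAf.symm
    _ ≤ T.card := af_le_card hT
    _ ≤ ∑ K, ((S K).image (Sym2.map Subtype.val)).card := Finset.card_biUnion_le
    _ ≤ ∑ K, (S K).card := Finset.sum_le_sum fun K _ => Finset.card_image_le
    _ ≤ _ := Finset.sum_le_sum fun K _ => hScard K

end NormalComponents

theorem statement11_general (G : SimpleGraph V) (hG : G.Connected)
    (M : Set (Sym2 V)) (hM : IsPM G M)
    (hAf : (Af G : ℤ) = (G.edgeSet.ncard : ℤ) - Fintype.card V + 1) :
    (∀ e ∈ G.edgeSet, IsFixedEdge G e → G.IsBridge e) ∧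
    ∀ K : (nonFixed G).ConnectedComponent,
      (Af (SimpleGraph.induce K.supp (nonFixed G)) : ℤ) =
        ((SimpleGraph.induce K.supp (nonFixed G)).edgeSet.ncard : ℤ) -
          Nat.card K.supp + 1 := by
  set H := nonFixed G
  have hAfG : Af G ≤ ∑ K : H.ConnectedComponent, Af (H.induce K.supp) :=
    Af_le_sum_Af_induce_supp hM
  have hAfK (K : H.ConnectedComponent) :
      Af (H.induce K.supp) + Nat.card K.supp ≤ (H.induce K.supp).edgeSet.ncard + 1 :=
    Af_add_card_le K.connected_toSimpleGraph
  have hsumL : ∑ K : H.ConnectedComponent, (Af (H.induce K.supp) + Nat.card K.supp) =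
      ∑ K : H.ConnectedComponent, Af (H.induce K.supp) + Fintype.card V := by
    rw [Finset.sum_add_distrib, sum_card_supp]
  have hsumR : ∑ K : H.ConnectedComponent, ((H.induce K.supp).edgeSet.ncard + 1) =
      H.edgeSet.ncard + Nat.card H.ConnectedComponent := by
    rw [Finset.sum_add_distrib, sum_ncard_edgeSet_induce_supp, Finset.sum_const,
      Finset.card_univ, smul_eq_mul, mul_one, Nat.card_eq_fintype_card]
  have hsum : ∑ K : H.ConnectedComponent, (Af (H.induce K.supp) + Nat.card K.supp) ≤
      ∑ K : H.ConnectedComponent, ((H.induce K.supp).edgeSet.ncard + 1) :=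
    Finset.sum_le_sum fun K _ => hAfK K
  have hedges : (G.edgeSet \ H.edgeSet).ncard + H.edgeSet.ncard = G.edgeSet.ncard :=
    Set.ncard_sdiff_add_ncard_of_subset (edgeSet_mono nonFixed_le)
  have hcomp := card_connectedComponent_le (H := H) hG
  have hsumEq : ∑ K : H.ConnectedComponent, (Af (H.induce K.supp) + Nat.card K.supp) =
      ∑ K : H.ConnectedComponent, ((H.induce K.supp).edgeSet.ncard + 1) := by
    omega
  refine ⟨fun e he hfix => isBridge_of_card_connectedComponent_eq (H := H) hG (by omega)
    ⟨he, fun h => (mem_edgeSet_nonFixed.1 h).2 hfix⟩, fun K => ?_⟩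
  have := (Finset.sum_eq_sum_iff_of_le fun K _ => hAfK K).1 hsumEq K (Finset.mem_univ K)
  omega

/-- If `G` is a connected bipartite graph with a perfect matching
and `Af(G) = r(G)`, then every fixed edge of `G` is a cut-edge (bridge) and
every normal component `Gᵢ` satisfies `Af(Gᵢ) = r(Gᵢ)`. -/
theorem statement11 (G : SimpleGraph V) (hG : G.Connected) (hbip : G.Colorable 2)
    (M : Set (Sym2 V)) (hM : IsPM G M)
    (hAf : (Af G : ℤ) = (G.edgeSet.ncard : ℤ) - Fintype.card V + 1) :
    (∀ e ∈ G.edgeSet, IsFixedEdge G e → G.IsBridge e) ∧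
    ∀ K : (nonFixed G).ConnectedComponent,
      (Af (SimpleGraph.induce K.supp (nonFixed G)) : ℤ) =
        ((SimpleGraph.induce K.supp (nonFixed G)).edgeSet.ncard : ℤ) -
          Nat.card K.supp + 1 :=
  statement11_general G hG M hM hAf
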